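/- For all real r, arctan(r) = (r/√(1+r²)) · Σ_{k=0}^∞ ((2k-1)!!/((2k)!!(2k+1))) · (r²/(1+r²))^k. -/

import Mathlib

/-! The ratio `(2k-1)!!/(2k)!!` is the `k`-th coefficient of the binomial series of
`(1 - x)^(-1/2)`, so `∑ (2k-1)!!/(2k)!! y^(2k) = 1/√(1 - y²)` on `(-1, 1)`. Integrating termwise
from `0` gives the arcsine series, and `arctan r = arcsin (r / √(1 + r²))`. -/

open Real

/-- (2k)!! = 2^k k! -/
noncomputable def evenDF (k : ℕ) : ℝ := 2 ^ k * k.factorial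

/-- (2k-1)!! = (2k)!/(2^k k!), with (-1)!! = 1. -/
noncomputable def oddDF' (k : ℕ) : ℝ := (2 * k).factorial / (2 ^ k * k.factorial)

lemma evenDF_pos (k : ℕ) : 0 < evenDF k := by
  unfold evenDF; positivity

lemma oddDF'_div_evenDF_pos (k : ℕ) : 0 < oddDF' k / evenDF k := by
  unfold oddDF' evenDF; positivity

lemma ascPochhammer_eval_half (n : ℕ) :
    (ascPochhammer ℝ n).eval (1 / 2) = n.factorial * (oddDF' n / evenDF n) := by
  induction n with
  | zero => simp [oddDF', evenDF]
  | succ n ih =>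
    rw [ascPochhammer_succ_eval, ih]
    simp only [oddDF', evenDF, Nat.mul_succ, Nat.factorial_succ]
    push_cast
    field_simp
    ring

lemma multichoose_half_eq_oddDF'_div_evenDF (n : ℕ) :
    Ring.multichoose (1 / 2 : ℝ) n = oddDF' n / evenDF n := by
  have h := Ring.factorial_nsmul_multichoose_eq_ascPochhammer (1 / 2 : ℝ) n
  rw [Polynomial.ascPochhammer_smeval_eq_eval, ascPochhammer_eval_half, nsmul_eq_mul] at h
  exact mul_left_cancel₀ (by positivity) h

lemma hasSum_oddDF'_div_evenDF_mul_pow {x : ℝ} (hx : |x| < 1) :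
    HasSum (fun n => oddDF' n / evenDF n * x ^ n) (1 / √(1 - x)) := by
  have hmem : x ∈ Metric.eball (0 : ℝ) 1 := by
    simpa [Metric.mem_eball, edist_dist, Real.dist_eq] using hx
  have h := (Real.one_div_one_sub_rpow_hasFPowerSeriesOnBall_zero (1 / 2)).hasSum hmem
  simp only [FormalMultilinearSeries.ofScalars_apply_eq, zero_add, smul_eq_mul] at h
  rw [Real.sqrt_eq_rpow]
  simpa only [← Ring.multichoose_eq, multichoose_half_eq_oddDF'_div_evenDF] using h

lemma hasDerivAt_arcsin_series {y : ℝ} (hy : |y| < 1) :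
    HasDerivAt (fun z => ∑' k : ℕ, oddDF' k / (evenDF k * (2 * k + 1)) * z ^ (2 * k + 1))
      (1 / √(1 - y ^ 2)) y := by
  obtain ⟨ρ, hyρ, hρ1⟩ := exists_between hy
  have hρ : 0 ≤ ρ := (abs_nonneg y).trans hyρ.le
  have hball {z : ℝ} : z ∈ Metric.ball 0 ρ ↔ |z| < ρ := by
    rw [mem_ball_zero_iff, Real.norm_eq_abs]
  have hsum {z : ℝ} (hz : |z| < 1) :
      HasSum (fun k => oddDF' k / evenDF k * z ^ (2 * k)) (1 / √(1 - z ^ 2)) := by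
    simpa only [pow_mul] using hasSum_oddDF'_div_evenDF_mul_pow (x := z ^ 2) (by
      rw [abs_pow]; exact pow_lt_one₀ (abs_nonneg z) hz two_ne_zero)
  have hderiv (k : ℕ) (z : ℝ) (_ : z ∈ Metric.ball 0 ρ) :
      HasDerivAt (fun z => oddDF' k / (evenDF k * (2 * k + 1)) * z ^ (2 * k + 1))
        (oddDF' k / evenDF k * z ^ (2 * k)) z := by
    refine ((hasDerivAt_pow (2 * k + 1) z).const_mul _).congr_deriv ?_
    have := evenDF_pos k
    rw [Nat.add_sub_cancel]
    push_cast
    field_simp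
  -- on `ball 0 ρ` the derived series is dominated by its own terms at `ρ`
  have hbound (k : ℕ) (z : ℝ) (hz : z ∈ Metric.ball 0 ρ) :
      ‖oddDF' k / evenDF k * z ^ (2 * k)‖ ≤ oddDF' k / evenDF k * ρ ^ (2 * k) := by
    rw [norm_mul, norm_pow, Real.norm_eq_abs, Real.norm_eq_abs,
      abs_of_pos (oddDF'_div_evenDF_pos k)]
    exact mul_le_mul_of_nonneg_left (pow_le_pow_left₀ (abs_nonneg z) (hball.1 hz).le _)
      (oddDF'_div_evenDF_pos k).le
  have h := hasDerivAt_tsum_of_isPreconnected (hsum (by rwa [abs_of_nonneg hρ])).summable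
    Metric.isOpen_ball (convex_ball 0 ρ).isPreconnected hderiv hbound
    (hball.2 (by rw [abs_zero]; exact (abs_nonneg y).trans_lt hyρ))
    (summable_zero.congr fun k => by simp) (hball.2 hyρ)
  rwa [(hsum hy).tsum_eq] at h

lemma arcsin_eq_tsum {y : ℝ} (hy : |y| < 1) :
    arcsin y = ∑' k : ℕ, oddDF' k / (evenDF k * (2 * k + 1)) * y ^ (2 * k + 1) := by
  have hball {z : ℝ} : z ∈ Metric.ball 0 1 ↔ |z| < 1 := by
    rw [mem_ball_zero_iff, Real.norm_eq_abs]
  have hseries (z) (hz : z ∈ Metric.ball (0 : ℝ) 1) := hasDerivAt_arcsin_series (hball.1 hz)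
  have harcsin (z) (hz : z ∈ Metric.ball (0 : ℝ) 1) : HasDerivAt arcsin (1 / √(1 - z ^ 2)) z := by
    obtain ⟨h₁, h₂⟩ := abs_lt.1 (hball.1 hz)
    exact hasDerivAt_arcsin h₁.ne' h₂.ne
  exact Metric.isOpen_ball.eqOn_of_deriv_eq (convex_ball 0 1).isPreconnected
    (fun z hz => (harcsin z hz).differentiableAt.differentiableWithinAt)
    (fun z hz => (hseries z hz).differentiableAt.differentiableWithinAt)
    (fun z hz => (harcsin z hz).deriv.trans (hseries z hz).deriv.symm)
    (Metric.mem_ball_self one_pos) (by simp) (hball.2 hy)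

theorem arctan_arcsin_series (r : ℝ) :
    Real.arctan r =
      (r / Real.sqrt (1 + r ^ 2)) *
        ∑' k : ℕ, (oddDF' k / (evenDF k * (2 * k + 1))) * (r ^ 2 / (1 + r ^ 2)) ^ k := by
  have hpos : (0 : ℝ) < 1 + r ^ 2 := by positivity
  set y : ℝ := r / √(1 + r ^ 2)
  have hy2 : y ^ 2 = r ^ 2 / (1 + r ^ 2) := by
    rw [div_pow, Real.sq_sqrt hpos.le]
  have hy : |y| < 1 := by
    rw [← sq_lt_one_iff_abs_lt_one, hy2, div_lt_one hpos]
    linarith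
  rw [Real.arctan_eq_arcsin, arcsin_eq_tsum hy, ← hy2, ← tsum_mul_left]
  congr with k
  ring
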